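/- arXiv:1705.09428 — 5 statements merged into one kernel-verified Lean document; each statement's English description precedes it below -/
import Mathlib

section
/- A connected graph of order at least two in which every edge lies in some perfect matching (a matching covered graph) has no cut vertex. -/
open SimpleGraph

/-- A perfect matching of `G`, viewed as a set of edges: every edge of `M` is an
edge of `G`, and every vertex lies in exactly one edge of `M`. -/
def IsPM {V : Type*} (G : SimpleGraph V) (M : Set (Sym2 V)) : Prop :=
  M ⊆ G.edgeSet ∧ ∀ v : V, ∃! e, e ∈ M ∧ v ∈ e

/-- A matching covered graph: connected, of order at least two, in which every
edge lies in some perfect matching. -/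
def MatchingCovered {V : Type*} (G : SimpleGraph V) : Prop :=
  G.Connected ∧ 2 ≤ Nat.card V ∧ ∀ e ∈ G.edgeSet, ∃ M, IsPM G M ∧ e ∈ M

/-- The edge cut `∂(X)`: edges of `G` with exactly one end in `X`. -/
def edgeCut {V : Type*} (G : SimpleGraph V) (X : Set V) : Set (Sym2 V) :=
  {e | e ∈ G.edgeSet ∧ ∃ x y, e = s(x, y) ∧ x ∈ X ∧ y ∉ X}

/-- The number of odd components of `G - S`. -/
noncomputable def numOddComponents {V : Type*} (G : SimpleGraph V) (S : Set V) : ℕ :=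
  Nat.card {c : (G.induce (Sᶜ : Set V)).ConnectedComponent // Odd (Nat.card c.supp)}

/-- A barrier: a vertex set `B` such that `G - B` has exactly `|B|` odd components. -/
def IsBarrier {V : Type*} (G : SimpleGraph V) (B : Set V) : Prop :=
  numOddComponents G B = B.ncard

/-- The cut `∂(X)` is tight: every perfect matching meets it in exactly one edge. -/
def TightCut {V : Type*} (G : SimpleGraph V) (X : Set V) : Prop :=
  ∀ M, IsPM G M → (M ∩ edgeCut G X).ncard = 1

/-- The cut `∂(X)` is separating: every edge lies in a perfect matching meeting
the cut in exactly one edge. -/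
def SeparatingCut {V : Type*} (G : SimpleGraph V) (X : Set V) : Prop :=
  ∀ e ∈ G.edgeSet, ∃ M, IsPM G M ∧ e ∈ M ∧ (M ∩ edgeCut G X).ncard = 1

/-!
Suppose `G - v` is disconnected and let `C` be one of its components. Since `G` is connected,
`v` has a neighbour `w₂` in `C` and a neighbour `w₁` in another component. A perfect matching
through `vw₁` pairs up the vertices of `C` among themselves, so `|C|` is even; one through `vw₂`
pairs up all vertices of `C` except `w₂`, so `|C|` is odd.
-/

open Function

theorem Set.even_ncard_of_involutive {α : Type*} {f : α → α} (hf : Involutive f)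
    (hfix : ∀ x, f x ≠ x) {s : Set α} (hs : s.Finite) (hmaps : Set.MapsTo f s s) :
    Even s.ncard := by
  classical
  rw [Set.ncard_eq_toFinset_card s hs, ← ZMod.natCast_eq_zero_iff_even, Finset.cast_card]
  exact Finset.sum_involution (fun a _ ↦ f a) (fun _ _ ↦ by decide) (fun a _ _ ↦ hfix a)
    (fun _ ha ↦ by simpa using hmaps (by simpa using ha)) (fun a _ ↦ hf a)

namespace IsPM

variable {V : Type*} {G : SimpleGraph V} {M : Set (Sym2 V)}

theorem existsUnique_mem (hM : IsPM G M) (x : V) : ∃! y, s(x, y) ∈ M := by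
  obtain ⟨e, ⟨heM, hxe⟩, he⟩ := hM.2 x
  obtain ⟨y, rfl⟩ := Sym2.mem_iff_exists.mp hxe
  refine ⟨y, heM, fun z hz ↦ ?_⟩
  exact Sym2.congr_right.mp (he _ ⟨hz, Sym2.mem_mk_left x z⟩)

theorem exists_partner (hM : IsPM G M) :
    ∃ f : V → V, Involutive f ∧ (∀ x, G.Adj x (f x)) ∧ ∀ x y, s(x, y) ∈ M → f x = y := by
  choose f hfM hf using hM.existsUnique_mem
  refine ⟨f, fun x ↦ ?_, fun x ↦ hM.1 (hfM x), fun x y hxy ↦ (hf x y hxy).symm⟩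
  exact (hf (f x) x (by simpa [Sym2.eq_swap] using hfM x)).symm

-- `hC` says that `C` is a union of components of `G - v`.
theorem even_ncard_iff [Finite V] (hM : IsPM G M) {v w : V} (hvw : s(v, w) ∈ M) {C : Set V}
    (hv : v ∉ C) (hC : ∀ x ∈ C, ∀ y, G.Adj x y → y ≠ v → y ∈ C) :
    Even C.ncard ↔ w ∉ C := by
  obtain ⟨f, hf, hadj, hfM⟩ := hM.exists_partner
  have hfv : f v = w := hfM v w hvw
  have hrest : Even (C \ {w}).ncard := by
    refine Set.even_ncard_of_involutive hf (fun x ↦ (hadj x).ne') (Set.toFinite _) ?_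
    rintro x ⟨hxC, hxw : x ≠ w⟩
    refine ⟨hC x hxC _ (hadj x) fun h ↦ hxw ?_, fun h : f x = w ↦ hv ?_⟩
    · rw [← hfv, ← h, hf]
    · rwa [← hf v, hfv, ← h, hf]
  by_cases hw : w ∈ C
  · rw [← Set.ncard_sdiff_singleton_add_one hw, Nat.even_add_one]
    exact iff_of_false (not_not.mpr hrest) (not_not.mpr hw)
  · rw [Set.sdiff_singleton_eq_self hw] at hrest
    exact iff_of_true hrest hw

end IsPM

namespace SimpleGraph

variable {V : Type*} {G : SimpleGraph V}

theorem Connected.exists_adj_mem {v : V} {C : Set V} (hG : G.Connected) (hv : v ∉ C)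
    (hne : C.Nonempty) (hC : ∀ x ∈ C, ∀ y, G.Adj x y → y ≠ v → y ∈ C) :
    ∃ w ∈ C, G.Adj v w := by
  obtain ⟨x, hx⟩ := hne
  obtain ⟨d, -, hd, hd'⟩ := (hG.preconnected x v).some.exists_boundary_dart C hx hv
  have hdv : d.snd = v := by_contra fun h ↦ hd' (hC _ hd _ d.adj h)
  exact ⟨d.fst, hd, hdv ▸ d.adj.symm⟩

theorem ConnectedComponent.mem_image_val_supp_of_adj {s : Set V}
    {c : (G.induce s).ConnectedComponent} {x y : V} (hx : x ∈ Subtype.val '' c.supp)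
    (hy : y ∈ s) (hxy : G.Adj x y) : y ∈ Subtype.val '' c.supp := by
  obtain ⟨x, hxc, rfl⟩ := hx
  exact ⟨⟨y, hy⟩, c.mem_supp_of_adj_mem_supp hxc (induce_adj.mpr hxy), rfl⟩

end SimpleGraph

theorem stmt1_general {V : Type*} (G : SimpleGraph V)
    (hG : MatchingCovered G) (v : V) :
    (G.induce ({v}ᶜ : Set V)).Connected := by
  obtain ⟨hconn, hcard, hcover⟩ := hG
  have : Finite V := Nat.finite_of_card_ne_zero (by omega)
  have : Nontrivial V := Finite.one_lt_card_iff_nontrivial.mp hcard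
  set G' := G.induce ({v}ᶜ : Set V)
  refine (connected_iff G').mpr ⟨fun x y ↦ ?_, (Set.nonempty_compl_of_nontrivial v).to_subtype⟩
  by_contra hxy
  let C := Subtype.val '' (G'.connectedComponentMk y).supp
  have hclosed (c : G'.ConnectedComponent) :
      ∀ a ∈ Subtype.val '' c.supp, ∀ b, G.Adj a b → b ≠ v → b ∈ Subtype.val '' c.supp :=
    fun a ha b hab hbv ↦ c.mem_image_val_supp_of_adj ha hbv hab
  have hv (c : G'.ConnectedComponent) : v ∉ Subtype.val '' c.supp := fun ⟨u, _, hu⟩ ↦ u.2 hu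
  obtain ⟨w₁, hw₁x, hvw₁⟩ := hconn.exists_adj_mem (hv _) ⟨x, x, rfl, rfl⟩ (hclosed _)
  obtain ⟨w₂, hw₂C, hvw₂⟩ := hconn.exists_adj_mem (hv _) ⟨y, y, rfl, rfl⟩ (hclosed _)
  have hw₁C : w₁ ∉ C := by
    rintro ⟨u, huy, rfl⟩
    obtain ⟨u', hux, hu'u⟩ := hw₁x
    rw [Subtype.val_injective hu'u] at hux
    exact hxy (ConnectedComponent.exact (hux.symm.trans huy))
  obtain ⟨M₁, hM₁, hvw₁M⟩ := hcover _ (G.mem_edgeSet.mpr hvw₁)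
  obtain ⟨M₂, hM₂, hvw₂M⟩ := hcover _ (G.mem_edgeSet.mpr hvw₂)
  have hCeven : Even C.ncard := (hM₁.even_ncard_iff hvw₁M (hv _) (hclosed _)).mpr hw₁C
  exact (hM₂.even_ncard_iff hvw₂M (hv _) (hclosed _)).mp hCeven hw₂C

/-- A matching covered graph has no cut vertex. -/
theorem stmt1 {V : Type*} [Fintype V] (G : SimpleGraph V)
    (hG : MatchingCovered G) (v : V) :
    (G.induce ({v}ᶜ : Set V)).Connected :=
  stmt1_general G hG v
end

section
/- Let G be a connected graph with a perfect matching. Then G is matching covered if and only if every barrier of G is a stable (independent) set. -/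
open SimpleGraph

/-! If a perfect matching `M` contains an edge `uw` with both ends in a barrier `B`, then `M`
matches every odd component of `G - B` into `B` injectively and avoiding `u` and `w`, so `G - B`
has at most `|B| - 2` odd components, a contradiction. Conversely, if an edge `uv` lies in no
perfect matching, then `G - u - v` has none, so by Tutte's theorem some `S` leaves more than `|S|`
odd components in `G - u - v`. For `B = S ∪ {u, v}` this says that `G - B` has more than
`|B| - 2` odd components; as `G` has a perfect matching, Tutte's bound and parity force exactly
`|B|`, so `B` is a barrier containing the adjacent vertices `u` and `v`. -/

namespace SimpleGraph

variable {V W : Type*}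

lemma Iso.ncard_supp_connectedComponentEquiv {G : SimpleGraph V} {G' : SimpleGraph W}
    (φ : G ≃g G') (c : G.ConnectedComponent) :
    (φ.connectedComponentEquiv c).supp.ncard = c.supp.ncard := by
  rw [← Nat.card_coe_set_eq, ← Nat.card_coe_set_eq]
  exact (Nat.card_congr (ConnectedComponent.isoEquivSupp φ c)).symm

lemma Iso.ncard_oddComponents_eq {G : SimpleGraph V} {G' : SimpleGraph W} (φ : G ≃g G') :
    G.oddComponents.ncard = G'.oddComponents.ncard := by
  rw [← Nat.card_coe_set_eq, ← Nat.card_coe_set_eq]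
  exact Nat.card_congr (φ.connectedComponentEquiv.subtypeEquiv fun c => by
    simp only [Set.mem_ofPred_eq, φ.ncard_supp_connectedComponentEquiv])

def deleteVertsIsoInduceCompl (G : SimpleGraph V) (S : Set V) :
    ((⊤ : G.Subgraph).deleteVerts S).coe ≃g G.induce Sᶜ where
  toEquiv := Equiv.subtypeEquivRight fun _ => by simp
  map_rel_iff' := by simp +contextual

def induceInduceComplIso (G : SimpleGraph V) (T : Set V) (S : Set T) :
    (G.induce T).induce Sᶜ ≃g G.induce (Tᶜ ∪ Subtype.val '' S)ᶜ where
  toEquiv := (Equiv.subtypeSubtypeEquivSubtypeExists _ _).trans <|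
    Equiv.subtypeEquivRight fun x => by
      constructor
      · rintro ⟨hx, hxS⟩ (hx' | ⟨y, hyS, rfl⟩)
        · exact hx' hx
        · exact hxS hyS
      · intro h
        have hx : x ∈ T := by_contra fun hx => h (Or.inl hx)
        exact ⟨hx, fun hxS => h (Or.inr ⟨_, hxS, rfl⟩)⟩
  map_rel_iff' := by simp

end SimpleGraph

section NumOddComponents

variable {V : Type*} (G : SimpleGraph V)

lemma numOddComponents_eq_ncard_oddComponents_induce (S : Set V) :
    numOddComponents G S = (G.induce Sᶜ).oddComponents.ncard := by
  rw [← Nat.card_coe_set_eq]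
  simp_rw [numOddComponents, Nat.card_coe_set_eq]
  rfl

lemma numOddComponents_eq_ncard_oddComponents_deleteVerts (S : Set V) :
    numOddComponents G S = ((⊤ : G.Subgraph).deleteVerts S).coe.oddComponents.ncard := by
  rw [numOddComponents_eq_ncard_oddComponents_induce,
    (deleteVertsIsoInduceCompl G S).ncard_oddComponents_eq]

lemma numOddComponents_induce (T : Set V) (S : Set T) :
    numOddComponents (G.induce T) S = numOddComponents G (Tᶜ ∪ Subtype.val '' S) := by
  rw [numOddComponents_eq_ncard_oddComponents_induce,
    numOddComponents_eq_ncard_oddComponents_induce,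
    (induceInduceComplIso G T S).ncard_oddComponents_eq]

lemma even_numOddComponents_iff [Finite V] (hV : Even (Nat.card V)) (S : Set V) :
    Even (numOddComponents G S) ↔ Even S.ncard := by
  rw [numOddComponents_eq_ncard_oddComponents_induce, ← Nat.not_odd_iff_even,
    odd_ncard_oddComponents, Nat.card_coe_set_eq, Nat.not_odd_iff_even,
    Set.even_ncard_compl_iff hV]

end NumOddComponents

section PerfectMatchings

variable {V : Type*} {G : SimpleGraph V}

lemma existsUnique_mem_and_mem_iff (M : Set (Sym2 V)) (v : V) :
    (∃! e, e ∈ M ∧ v ∈ e) ↔ ∃! w, s(v, w) ∈ M := by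
  constructor
  · rintro ⟨e, ⟨he, hv⟩, hu⟩
    obtain ⟨w, rfl⟩ := Sym2.mem_iff_exists.mp hv
    exact ⟨w, he, fun w' hw' => Sym2.congr_right.mp (hu _ ⟨hw', Sym2.mem_mk_left _ _⟩)⟩
  · rintro ⟨w, hw, hu⟩
    refine ⟨s(v, w), ⟨hw, Sym2.mem_mk_left _ _⟩, fun e ⟨he, hv⟩ => ?_⟩
    obtain ⟨w', rfl⟩ := Sym2.mem_iff_exists.mp hv
    rw [hu w' he]

lemma isPM_iff_exists_isPerfectMatching {M : Set (Sym2 V)} :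
    IsPM G M ↔ ∃ M' : G.Subgraph, M'.IsPerfectMatching ∧ M'.edgeSet = M := by
  constructor
  · rintro ⟨hMG, hM⟩
    let M' : G.Subgraph :=
      { verts := Set.univ
        Adj := fun x y => s(x, y) ∈ M
        adj_sub := fun h => hMG h
        edge_vert := fun _ => Set.mem_univ _
        symm := ⟨fun x y h => by rwa [Sym2.eq_swap]⟩ }
    have hE : M'.edgeSet = M := by
      ext e
      induction e using Sym2.ind
      exact Subgraph.mem_edgeSet
    exact ⟨M', Subgraph.isPerfectMatching_iff.mpr fun v =>
      (existsUnique_mem_and_mem_iff M v).mp (hM v), hE⟩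
  · rintro ⟨M', hM', rfl⟩
    refine ⟨M'.edgeSet_subset, fun v => (existsUnique_mem_and_mem_iff _ v).mpr ?_⟩
    simpa using Subgraph.isPerfectMatching_iff.mp hM' v

end PerfectMatchings

namespace SimpleGraph

variable {V : Type*} {G : SimpleGraph V}

lemma Subgraph.IsPerfectMatching.numOddComponents_le_ncard [Finite V] {M : G.Subgraph}
    (hM : M.IsPerfectMatching) (S : Set V) : numOddComponents G S ≤ S.ncard := by
  have h := not_isTutteViolator_of_isPerfectMatching hM S
  rwa [IsTutteViolator, ← numOddComponents_eq_ncard_oddComponents_deleteVerts, not_lt] at h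

lemma Subgraph.IsPerfectMatching.isBarrier_of_ncard_lt [Finite V] {M : G.Subgraph}
    (hM : M.IsPerfectMatching) {S : Set V} (hS : S.ncard < numOddComponents G S + 2) :
    IsBarrier G S := by
  cases nonempty_fintype V
  have hV : Even (Nat.card V) := Nat.card_eq_fintype_card (α := V) ▸ hM.even_card
  have hle := hM.numOddComponents_le_ncard S
  have hpar := even_numOddComponents_iff G hV S
  rw [Nat.even_iff, Nat.even_iff] at hpar
  unfold IsBarrier
  omega

lemma Subgraph.IsPerfectMatching.numOddComponents_add_two_le [Finite V] {M : G.Subgraph}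
    (hM : M.IsPerfectMatching) {S : Set V} {u w : V} (hu : u ∈ S) (hw : w ∈ S)
    (huw : M.Adj u w) : numOddComponents G S + 2 ≤ S.ncard := by
  choose f hf g hgf hg using ConnectedComponent.odd_matches_node_outside hM (u := S)
  have hfinj : f.Injective := fun c d hcd ↦ by
    replace hcd : g c = g d := Subtype.val_injective <| hM.1.eq_of_adj_right (hgf c) (hcd ▸ hgf d)
    exact Subtype.val_injective <| ConnectedComponent.eq_of_common_vertex (hg c) (hcd ▸ hg d)
  have hf_notMem : ∀ c, f c ∉ ({u, w} : Set V) := by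
    rintro c (hc | hc)
    · exact (g c).2.2 (hM.1.eq_of_adj_right (hgf c) (hc ▸ huw.symm) ▸ hw)
    · exact (g c).2.2 (hM.1.eq_of_adj_right (hgf c) (hc ▸ huw) ▸ hu)
  have hsub : ({u, w} : Set V) ⊆ S := Set.insert_subset hu (Set.singleton_subset_iff.mpr hw)
  have hcard := Nat.card_le_card_of_injective
    (fun c ↦ (⟨f c, hf c, hf_notMem c⟩ : ↥(S \ {u, w})))
    fun c d hcd ↦ hfinj (congrArg Subtype.val hcd)
  rw [Nat.card_coe_set_eq, Nat.card_coe_set_eq, Set.ncard_sdiff hsub, Set.ncard_pair huw.ne,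
    ← numOddComponents_eq_ncard_oddComponents_deleteVerts] at hcard
  have h2 := Set.ncard_le_ncard hsub
  rw [Set.ncard_pair huw.ne] at h2
  omega

lemma exists_isPerfectMatching_adj_of_induce {u v : V} (huv : G.Adj u v)
    {M : (G.induce {u, v}ᶜ).Subgraph} (hM : M.IsPerfectMatching) :
    ∃ M' : G.Subgraph, M'.IsPerfectMatching ∧ M'.Adj u v := by
  let e := Embedding.induce (G := G) ({u, v}ᶜ : Set V)
  have hMe : (M.map e.toHom).IsMatching := hM.1.map _ e.injective
  have hverts : (M.map e.toHom).verts = {u, v}ᶜ := by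
    rw [Subgraph.map_verts, hM.2.verts_eq_univ, Set.image_univ]
    exact Subtype.range_coe
  have huvM := Subgraph.IsMatching.subgraphOfAdj huv
  refine ⟨M.map e.toHom ⊔ G.subgraphOfAdj huv, ⟨hMe.sup huvM ?_, ?_⟩,
    Subgraph.sup_adj.mpr (.inr (subgraphOfAdj_adj_self huv))⟩
  · rw [hMe.support_eq_verts, huvM.support_eq_verts, hverts, subgraphOfAdj_verts]
    exact disjoint_compl_left
  · rw [Subgraph.isSpanning_iff, Subgraph.verts_sup, hverts, subgraphOfAdj_verts]
    exact Set.compl_union_self _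

lemma Subgraph.IsPerfectMatching.exists_isBarrier_of_induce [Finite V] {M : G.Subgraph}
    (hM : M.IsPerfectMatching) {u v : V}
    (h : ∀ M' : (G.induce {u, v}ᶜ).Subgraph, ¬M'.IsPerfectMatching) :
    ∃ B, IsBarrier G B ∧ u ∈ B ∧ v ∈ B := by
  obtain ⟨S, hS⟩ : ∃ S, (G.induce {u, v}ᶜ).IsTutteViolator S := by
    simpa using mt tutte.mpr (not_exists.mpr h)
  rw [IsTutteViolator, ← numOddComponents_eq_ncard_oddComponents_deleteVerts,
    numOddComponents_induce, compl_compl] at hS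
  have hB : ({u, v} ∪ Subtype.val '' S).ncard ≤ S.ncard + 2 := calc
    _ ≤ ({u, v} : Set V).ncard + (Subtype.val '' S).ncard := Set.ncard_union_le _ _
    _ ≤ 2 + S.ncard := by
      gcongr
      · exact (Set.ncard_insert_le _ _).trans (by rw [Set.ncard_singleton])
      · exact (Set.ncard_image_of_injective _ Subtype.val_injective).le
    _ = S.ncard + 2 := add_comm _ _
  exact ⟨{u, v} ∪ Subtype.val '' S, hM.isBarrier_of_ncard_lt (by omega),
    Or.inl (Or.inl rfl), Or.inl (Or.inr rfl)⟩

end SimpleGraph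

theorem stmt3_general {V : Type*} [Fintype V] (G : SimpleGraph V)
    (hM : ∃ M, IsPM G M) :
    (∀ e ∈ G.edgeSet, ∃ M, IsPM G M ∧ e ∈ M) ↔
      ∀ B : Set V, IsBarrier G B → ∀ u ∈ B, ∀ w ∈ B, ¬ G.Adj u w := by
  constructor
  · intro hcovered B hB u hu w hw huw
    obtain ⟨_, hPM, huwM⟩ := hcovered _ (G.mem_edgeSet.mpr huw)
    obtain ⟨M, hMperfect, rfl⟩ := isPM_iff_exists_isPerfectMatching.mp hPM
    have := hMperfect.numOddComponents_add_two_le hu hw huwM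
    rw [hB] at this
    omega
  · intro hstable e he
    induction e using Sym2.ind with | h u v =>
    obtain ⟨_, hPM⟩ := hM
    obtain ⟨M, hMperfect, -⟩ := isPM_iff_exists_isPerfectMatching.mp hPM
    by_cases h : ∃ M' : (G.induce {u, v}ᶜ).Subgraph, M'.IsPerfectMatching
    · obtain ⟨M', hM'⟩ := h
      obtain ⟨M'', hM'', huv⟩ := exists_isPerfectMatching_adj_of_induce he hM'
      exact ⟨_, isPM_iff_exists_isPerfectMatching.mpr ⟨M'', hM'', rfl⟩, huv⟩
    · obtain ⟨B, hB, hu, hv⟩ := hMperfect.exists_isBarrier_of_induce (not_exists.mp h)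
      exact absurd he (hstable B hB u hu v hv)

/-- A connected graph with a perfect matching is matching covered iff every
barrier is a stable set. -/
theorem stmt3 {V : Type*} [Fintype V] (G : SimpleGraph V)
    (hc : G.Connected) (hM : ∃ M, IsPM G M) :
    (∀ e ∈ G.edgeSet, ∃ M, IsPM G M ∧ e ∈ M) ↔
      ∀ B : Set V, IsBarrier G B → ∀ u ∈ B, ∀ w ∈ B, ¬ G.Adj u w :=
  stmt3_general G hM
end

section
/- In a bipartite matching covered graph, every separating cut is a tight cut. -/
/-!
Let `A` be a color class. A perfect matching `M` pairs each vertex of `X ∩ A` either with a vertex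
of `X ∖ A` or across the cut, and symmetrically for `X ∖ A`; hence the numbers `p(M)`, `q(M)` of
cut edges of `M` whose end in `X` lies in `A`, resp. outside `A`, satisfy
`p(M) - q(M) = |X ∩ A| - |X ∖ A|` for every `M`. A matching meeting the cut once shows that this
constant is `±1`, say `1`. If some perfect matching used a cut edge with its `X`-end outside `A`,
a matching through that edge meeting the cut once would have `p - q = -1`; so `q = 0` and `p = 1`
for every perfect matching.
-/

open SimpleGraph

section

variable {V : Type*} {G : SimpleGraph V}

namespace IsPM

variable {M : Set (Sym2 V)}

noncomputable def edgeAt (hM : IsPM G M) (v : V) : Sym2 V := (hM.2 v).exists.choose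

lemma edgeAt_mem (hM : IsPM G M) (v : V) : hM.edgeAt v ∈ M :=
  (hM.2 v).exists.choose_spec.1

lemma mem_edgeAt (hM : IsPM G M) (v : V) : v ∈ hM.edgeAt v :=
  (hM.2 v).exists.choose_spec.2

lemma eq_edgeAt (hM : IsPM G M) {v : V} {e : Sym2 V} (he : e ∈ M) (hv : v ∈ e) :
    e = hM.edgeAt v :=
  (hM.2 v).unique ⟨he, hv⟩ ⟨hM.edgeAt_mem v, hM.mem_edgeAt v⟩

lemma exists_adj_edgeAt_eq (hM : IsPM G M) (v : V) :
    ∃ w, G.Adj v w ∧ hM.edgeAt v = s(v, w) := by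
  obtain ⟨w, hw⟩ := Sym2.mem_iff_exists.mp (hM.mem_edgeAt v)
  have hadj : s(v, w) ∈ G.edgeSet := hw ▸ hM.1 (hM.edgeAt_mem v)
  exact ⟨w, hadj, hw⟩

end IsPM

def edgeCutFrom (G : SimpleGraph V) (X S : Set V) : Set (Sym2 V) :=
  {e | ∃ x y, x ∈ X ∩ S ∧ y ∉ X ∧ G.Adj x y ∧ e = s(x, y)}

lemma edgeCut_eq_union_edgeCutFrom (X S : Set V) :
    edgeCut G X = edgeCutFrom G X S ∪ edgeCutFrom G X Sᶜ := by
  ext e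
  constructor
  · rintro ⟨he, x, y, rfl, hx, hy⟩
    by_cases hxS : x ∈ S
    · exact Or.inl ⟨x, y, ⟨hx, hxS⟩, hy, he, rfl⟩
    · exact Or.inr ⟨x, y, ⟨hx, hxS⟩, hy, he, rfl⟩
  · rintro (⟨x, y, ⟨hx, -⟩, hy, hxy, rfl⟩ | ⟨x, y, ⟨hx, -⟩, hy, hxy, rfl⟩) <;>
      exact ⟨hxy, x, y, rfl, hx, hy⟩

lemma disjoint_edgeCutFrom_compl (X S : Set V) :
    Disjoint (edgeCutFrom G X S) (edgeCutFrom G X Sᶜ) := by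
  rw [Set.disjoint_left]
  rintro e ⟨x, y, ⟨-, hxS⟩, hy, -, rfl⟩ ⟨u, v, ⟨hu, huS⟩, -, -, huv⟩
  rcases Sym2.eq_iff.mp huv with ⟨rfl, -⟩ | ⟨-, rfl⟩
  · exact huS hxS
  · exact hy hu

lemma disjoint_edgeCutFrom_sym2 (X S : Set V) : Disjoint (edgeCutFrom G X S) X.sym2 := by
  rw [Set.disjoint_left]
  rintro e ⟨x, y, -, hy, -, rfl⟩ hxy
  exact hy (Set.mk_mem_sym2_iff.mp hxy).2

lemma ncard_inter_edgeCut [Finite V] (M : Set (Sym2 V)) (X S : Set V) :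
    (M ∩ edgeCut G X).ncard =
      (M ∩ edgeCutFrom G X S).ncard + (M ∩ edgeCutFrom G X Sᶜ).ncard := by
  rw [edgeCut_eq_union_edgeCutFrom X S, Set.inter_union_distrib_left]
  exact Set.ncard_union_eq
    ((disjoint_edgeCutFrom_compl X S).mono Set.inter_subset_right Set.inter_subset_right)

def IsColorClass (G : SimpleGraph V) (A : Set V) : Prop :=
  ∀ u w : V, G.Adj u w → (u ∈ A ↔ w ∉ A)

variable {A X : Set V} {M : Set (Sym2 V)}

lemma IsColorClass.compl (hA : IsColorClass G A) : IsColorClass G Aᶜ := by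
  intro u w huw
  simp only [Set.mem_compl_iff, not_not]
  exact (not_congr (hA u w huw)).trans not_not

/-- Each vertex of `X ∩ A` is matched either across the cut or inside `X`, and each edge of `M`
inside `X` has exactly one end in `A`. -/
lemma IsPM.bijOn_edgeAt (hA : IsColorClass G A) (hM : IsPM G M) :
    Set.BijOn hM.edgeAt (X ∩ A) (M ∩ edgeCutFrom G X A ∪ M ∩ X.sym2) := by
  refine ⟨?_, ?_, ?_⟩
  · rintro v hv
    obtain ⟨w, hvw, hedge⟩ := hM.exists_adj_edgeAt_eq v
    by_cases hw : w ∈ X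
    · exact Or.inr ⟨hM.edgeAt_mem v, hedge ▸ ⟨hv.1, hw⟩⟩
    · exact Or.inl ⟨hM.edgeAt_mem v, v, w, hv, hw, hvw, hedge⟩
  · rintro u ⟨-, huA⟩ v ⟨-, hvA⟩ huv
    obtain ⟨w, huw, hedge⟩ := hM.exists_adj_edgeAt_eq u
    have hv : v ∈ s(u, w) := hedge ▸ huv ▸ hM.mem_edgeAt v
    rcases Sym2.mem_iff.mp hv with rfl | rfl
    · rfl
    · exact absurd hvA ((hA u v huw).mp huA)
  · rintro e (⟨he, x, y, hx, -, -, rfl⟩ | ⟨he, hsym⟩)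
    · exact ⟨x, hx, (hM.eq_edgeAt he (Sym2.mem_mk_left x y)).symm⟩
    · induction e with | _ x y => ?_
      obtain ⟨hx, hy⟩ := Set.mk_mem_sym2_iff.mp hsym
      by_cases hxA : x ∈ A
      · exact ⟨x, ⟨hx, hxA⟩, (hM.eq_edgeAt he (Sym2.mem_mk_left x y)).symm⟩
      · have hyA : y ∈ A := not_not.mp (mt (hA x y (hM.1 he)).mpr hxA)
        exact ⟨y, ⟨hy, hyA⟩, (hM.eq_edgeAt he (Sym2.mem_mk_right x y)).symm⟩

lemma IsPM.ncard_inter_eq [Finite V] (hA : IsColorClass G A) (hM : IsPM G M) :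
    (X ∩ A).ncard = (M ∩ edgeCutFrom G X A).ncard + (M ∩ X.sym2).ncard := by
  rw [(hM.bijOn_edgeAt hA).ncard_eq]
  exact Set.ncard_union_eq
    ((disjoint_edgeCutFrom_sym2 X A).mono Set.inter_subset_right Set.inter_subset_right)

lemma IsPM.ncard_inter_add_ncard_edgeCutFrom_compl [Finite V]
    (hA : IsColorClass G A) (hM : IsPM G M) :
    (X ∩ A).ncard + (M ∩ edgeCutFrom G X Aᶜ).ncard =
      (X ∩ Aᶜ).ncard + (M ∩ edgeCutFrom G X A).ncard := by
  have hin := hM.ncard_inter_eq (X := X) hA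
  have hout := hM.ncard_inter_eq (X := X) hA.compl
  omega

lemma SeparatingCut.ncard_inter_eq_add_one_or [Finite V] [Nonempty V]
    (hA : IsColorClass G A) (hsep : SeparatingCut G X) (hM : IsPM G M) :
    (X ∩ A).ncard = (X ∩ Aᶜ).ncard + 1 ∨ (X ∩ Aᶜ).ncard = (X ∩ A).ncard + 1 := by
  obtain ⟨v⟩ := ‹Nonempty V›
  obtain ⟨M₀, hM₀, -, hcut⟩ := hsep _ (hM.1 (hM.edgeAt_mem v))
  have hsplit := ncard_inter_edgeCut (G := G) M₀ X A
  have hbal := hM₀.ncard_inter_add_ncard_edgeCutFrom_compl (X := X) hA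
  omega

lemma SeparatingCut.edgeCutFrom_compl_eq_empty [Finite V]
    (hA : IsColorClass G A) (hsep : SeparatingCut G X)
    (hexcess : (X ∩ A).ncard = (X ∩ Aᶜ).ncard + 1) (hM : IsPM G M) :
    M ∩ edgeCutFrom G X Aᶜ = ∅ := by
  refine Set.eq_empty_of_forall_notMem ?_
  rintro e ⟨heM, he⟩
  obtain ⟨M', hM', heM', hcut⟩ := hsep e (hM.1 heM)
  have hpos : (M' ∩ edgeCutFrom G X Aᶜ).ncard ≠ 0 := Set.ncard_ne_zero_of_mem ⟨heM', he⟩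
  have hsplit := ncard_inter_edgeCut (G := G) M' X A
  have hbal := hM'.ncard_inter_add_ncard_edgeCutFrom_compl (X := X) hA
  omega

lemma SeparatingCut.tightCut [Finite V]
    (hA : IsColorClass G A) (hsep : SeparatingCut G X)
    (hexcess : (X ∩ A).ncard = (X ∩ Aᶜ).ncard + 1) : TightCut G X := by
  intro M hM
  have hsplit := ncard_inter_edgeCut (G := G) M X A
  have hbal := hM.ncard_inter_add_ncard_edgeCutFrom_compl (X := X) hA
  rw [hsep.edgeCutFrom_compl_eq_empty hA hexcess hM, Set.ncard_empty] at hsplit hbal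
  omega

end

/-- In a bipartite matching covered graph, every separating cut is tight. -/
theorem stmt13 {V : Type*} [Fintype V] (G : SimpleGraph V)
    (hG : MatchingCovered G) (A : Set V)
    (hbip : ∀ u w : V, G.Adj u w → (u ∈ A ↔ w ∉ A))
    (X : Set V) (hsep : SeparatingCut G X) :
    TightCut G X := by
  have := hG.1.nonempty
  have hA : IsColorClass G A := hbip
  intro M hM
  rcases hsep.ncard_inter_eq_add_one_or hA hM with hexcess | hexcess
  · exact hsep.tightCut hA hexcess M hM
  · exact hsep.tightCut hA.compl (by rwa [compl_compl]) M hM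
end

section
/- Let G be a matching covered graph with a 2-separation {u, v} (a vertex cut of size two that is not a barrier), and let S be the union of vertex sets of a nonempty proper subset of the components of G − u − v. Then ∂(S ∪ {u}) is a tight cut of G. -/
open SimpleGraph

/-! Since `{u, v}` is not a barrier, the easy half of Tutte's condition (a perfect matching
matches each odd component of `G - u - v` into `{u, v}`) together with parity forces every
component of `G - u - v` to be even. Hence `S ∪ {u}` is odd, so every perfect matching meets
`∂(S ∪ {u})` in an odd number of edges. On the other hand `S` is closed under adjacency
outside `{u, v}`, so every matching edge of the cut covers `u` or `v`: there are at most two. -/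

open Function

lemma even_natCard_of_involutive {α : Type*} {f : α → α} (hf : Involutive f)
    (hfix : ∀ a, f a ≠ a) : Even (Nat.card α) := by
  classical
  cases finite_or_infinite α
  · have := Fintype.ofFinite α
    have hsupp : (hf.toPerm f).support = Finset.univ :=
      Finset.eq_univ_of_forall fun a => Equiv.Perm.mem_support.mpr (hfix a)
    have := Equiv.Perm.two_dvd_card_support (σ := hf.toPerm f) (Equiv.ext hf)
    rw [hsupp, Finset.card_univ, ← Nat.card_eq_fintype_card] at this
    exact even_iff_two_dvd.mpr this
  · simp

lemma even_ncard_of_involutive_of_mapsTo {α : Type*} {f : α → α} (hf : Involutive f)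
    (hfix : ∀ a, f a ≠ a) {A : Set α} (hA : Set.MapsTo f A A) : Even A.ncard := by
  rw [← Nat.card_coe_set_eq]
  exact even_natCard_of_involutive (f := hA.restrict f A A) (fun a => Subtype.ext (hf a))
    (fun a ha => hfix a (congrArg Subtype.val ha))

namespace IsPM

variable {V : Type*} {G : SimpleGraph V} {M : Set (Sym2 V)}

lemma exists_mk_mem (h : IsPM G M) (x : V) : ∃ y, s(x, y) ∈ M := by
  obtain ⟨e, ⟨he, hxe⟩, -⟩ := h.2 x
  obtain ⟨y, rfl⟩ := Sym2.mem_iff_exists.mp hxe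
  exact ⟨y, he⟩

noncomputable def partner (h : IsPM G M) (x : V) : V := (h.exists_mk_mem x).choose

lemma mk_partner_mem (h : IsPM G M) (x : V) : s(x, h.partner x) ∈ M :=
  (h.exists_mk_mem x).choose_spec

lemma adj_partner (h : IsPM G M) (x : V) : G.Adj x (h.partner x) :=
  h.1 (h.mk_partner_mem x)

lemma eq_mk_partner (h : IsPM G M) {x : V} {e : Sym2 V} (he : e ∈ M) (hx : x ∈ e) :
    e = s(x, h.partner x) :=
  (h.2 x).unique ⟨he, hx⟩ ⟨h.mk_partner_mem x, Sym2.mem_mk_left _ _⟩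

lemma partner_eq_of_mk_mem (h : IsPM G M) {x y : V} (hxy : s(x, y) ∈ M) : h.partner x = y := by
  rcases Sym2.eq_iff.mp (h.eq_mk_partner hxy (Sym2.mem_mk_left x y)) with ⟨-, hy⟩ | ⟨hfix, -⟩
  · exact hy.symm
  · exact absurd hfix (h.adj_partner x).ne

lemma partner_involutive (h : IsPM G M) : Involutive h.partner := fun x =>
  h.partner_eq_of_mk_mem (Sym2.eq_swap ▸ h.mk_partner_mem x)

lemma partner_ne (h : IsPM G M) (x : V) : h.partner x ≠ x := (h.adj_partner x).ne'

lemma even_natCard (h : IsPM G M) : Even (Nat.card V) :=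
  even_natCard_of_involutive h.partner_involutive h.partner_ne

lemma inter_edgeCut_eq_image (h : IsPM G M) (X : Set V) :
    M ∩ edgeCut G X = (fun x => s(x, h.partner x)) '' (X \ h.partner ⁻¹' X) := by
  ext e
  constructor
  · rintro ⟨he, -, x, y, rfl, hx, hy⟩
    have hp := h.partner_eq_of_mk_mem he
    exact ⟨x, ⟨hx, by rwa [Set.mem_preimage, hp]⟩, by simp only [hp]⟩
  · rintro ⟨x, ⟨hx, hpx⟩, rfl⟩
    exact ⟨h.mk_partner_mem x, h.adj_partner x, x, _, rfl, hx, hpx⟩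

lemma even_ncard_inter_edgeCut_iff [Finite V] (h : IsPM G M) (X : Set V) :
    Even (M ∩ edgeCut G X).ncard ↔ Even X.ncard := by
  have hinj : Set.InjOn (fun x => s(x, h.partner x)) (X \ h.partner ⁻¹' X) := by
    rintro x ⟨hx, -⟩ y ⟨-, hy⟩ hxy
    rcases Sym2.eq_iff.mp hxy with ⟨hxy, -⟩ | ⟨hxy, -⟩
    · exact hxy
    · exact absurd (show h.partner y ∈ X from hxy ▸ hx) hy
  have hpaired : Even (X ∩ h.partner ⁻¹' X).ncard :=
    even_ncard_of_involutive_of_mapsTo h.partner_involutive h.partner_ne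
      fun x ⟨hx, hpx⟩ => ⟨hpx, show h.partner (h.partner x) ∈ X by rwa [h.partner_involutive x]⟩
  rw [h.inter_edgeCut_eq_image, hinj.ncard_image,
    ← Set.ncard_inter_add_ncard_sdiff_eq_ncard X (h.partner ⁻¹' X), Nat.even_add]
  simp only [hpaired, true_iff]

lemma ncard_inter_edgeCut_le (h : IsPM G M) {X B : Set V} (hB : B.Finite)
    (hXB : ∀ x ∈ X, ∀ y ∉ X, G.Adj x y → x ∈ B ∨ y ∈ B) :
    (M ∩ edgeCut G X).ncard ≤ B.ncard := by
  refine (Set.ncard_le_ncard ?_ (hB.image fun b => s(b, h.partner b))).trans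
    (Set.ncard_image_le hB)
  rintro e ⟨he, -, x, y, rfl, hx, hy⟩
  rcases hXB x hx y hy (h.1 he) with hxB | hyB
  · exact ⟨x, hxB, (h.eq_mk_partner he (Sym2.mem_mk_left x y)).symm⟩
  · exact ⟨y, hyB, (h.eq_mk_partner he (Sym2.mem_mk_right x y)).symm⟩

lemma exists_partner_mem_of_odd (h : IsPM G M) {B : Set V}
    (c : (G.induce Bᶜ).ConnectedComponent) (hc : Odd c.supp.ncard) :
    ∃ x ∈ c.supp, h.partner x ∈ B := by
  by_contra! hout
  refine Nat.not_even_iff_odd.mpr hc ?_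
  rw [← Set.ncard_image_of_injective _ Subtype.val_injective]
  refine even_ncard_of_involutive_of_mapsTo h.partner_involutive h.partner_ne ?_
  rintro _ ⟨x, hx, rfl⟩
  refine ⟨⟨h.partner x, hout x hx⟩, ?_, rfl⟩
  rw [ConnectedComponent.mem_supp_iff, ← (c.mem_supp_iff x).mp hx, eq_comm]
  exact ConnectedComponent.connectedComponentMk_eq_of_adj (by simpa using h.adj_partner x)

lemma ncard_oddComponents_le [Finite V] (h : IsPM G M) (B : Set V) :
    (G.induce Bᶜ).oddComponents.ncard ≤ B.ncard := by
  choose x hx hxB using fun c : (G.induce Bᶜ).oddComponents => h.exists_partner_mem_of_odd c.1 c.2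
  rw [← Nat.card_coe_set_eq, ← Nat.card_coe_set_eq]
  refine Nat.card_le_card_of_injective (fun c => ⟨h.partner (x c), hxB c⟩) fun c d hcd => ?_
  have hxd : x c = x d := Subtype.ext (h.partner_involutive.injective (congrArg Subtype.val hcd))
  exact Subtype.ext (((c.1.mem_supp_iff _).mp (hx c)).symm.trans
    (hxd ▸ (d.1.mem_supp_iff _).mp (hx d)))

lemma even_ncard_oddComponents_add_ncard [Finite V] (h : IsPM G M) (B : Set V) :
    Even ((G.induce Bᶜ).oddComponents.ncard + B.ncard) := by
  have hV := h.even_natCard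
  rw [← Set.ncard_add_ncard_compl B, Nat.even_add] at hV
  rw [Nat.even_add, hV, ← Nat.not_odd_iff_even, odd_ncard_oddComponents, Nat.card_coe_set_eq,
    Nat.not_odd_iff_even]

end IsPM

lemma numOddComponents_eq_ncard_oddComponents {V : Type*} (G : SimpleGraph V) (B : Set V) :
    numOddComponents G B = (G.induce Bᶜ).oddComponents.ncard := by
  simp only [numOddComponents, Nat.card_coe_set_eq]
  rfl

lemma IsPM.even_ncard_supp_of_not_isBarrier {V : Type*} [Finite V] {G : SimpleGraph V}
    {M : Set (Sym2 V)} (h : IsPM G M) {u v : V} (huv : u ≠ v) (hnb : ¬ IsBarrier G {u, v})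
    (c : (G.induce ({u, v} : Set V)ᶜ).ConnectedComponent) : Even c.supp.ncard := by
  have hle := h.ncard_oddComponents_le {u, v}
  have hpar := h.even_ncard_oddComponents_add_ncard {u, v}
  rw [IsBarrier, numOddComponents_eq_ncard_oddComponents] at hnb
  rw [Set.ncard_pair huv] at hle hnb hpar
  have hnone : (G.induce ({u, v} : Set V)ᶜ).oddComponents = ∅ := by
    rw [Nat.even_iff] at hpar
    rw [← Set.ncard_eq_zero]
    omega
  exact Nat.not_odd_iff_even.mp fun hc => hnone.subset (show c ∈ _ from hc)

lemma even_ncard_iUnion_supp {α : Type*} [Finite α] {H : SimpleGraph α}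
    {𝒞 : Set H.ConnectedComponent} (h𝒞 : ∀ c ∈ 𝒞, Even c.supp.ncard) :
    Even (⋃ c ∈ 𝒞, c.supp).ncard := by
  have h𝒞fin : 𝒞.Finite := Set.toFinite 𝒞
  rw [h𝒞fin.ncard_biUnion (fun _ _ => Set.toFinite _)
    (fun _ _ _ _ hcd => H.pairwise_disjoint_supp_connectedComponent hcd),
    finsum_mem_eq_finite_toFinset_sum _ h𝒞fin]
  exact Finset.even_sum _ fun c hc => h𝒞 c (h𝒞fin.mem_toFinset.mp hc)

lemma mem_iUnion_supp_of_adj {V : Type*} {G : SimpleGraph V} {B : Set V}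
    {𝒞 : Set (G.induce Bᶜ).ConnectedComponent} {x y : V}
    (hx : x ∈ ⋃ c ∈ 𝒞, Subtype.val '' c.supp) (hxy : G.Adj x y) (hy : y ∉ B) :
    y ∈ ⋃ c ∈ 𝒞, Subtype.val '' c.supp := by
  simp only [Set.mem_iUnion] at hx ⊢
  obtain ⟨c, hc, x, hxc, rfl⟩ := hx
  refine ⟨c, hc, ⟨y, hy⟩, ?_, rfl⟩
  rw [ConnectedComponent.mem_supp_iff, ← (c.mem_supp_iff x).mp hxc, eq_comm]
  exact ConnectedComponent.connectedComponentMk_eq_of_adj (by simpa using hxy)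

theorem stmt15_general {V : Type*} [Fintype V] (G : SimpleGraph V)
    (u v : V) (huv : u ≠ v)
    (hnb : ¬ IsBarrier G {u, v})
    (𝒞 : Set ((G.induce (({u, v} : Set V)ᶜ)).ConnectedComponent))
    (S : Set V) (hS : S = ⋃ K ∈ 𝒞, Subtype.val '' K.supp) :
    TightCut G (S ∪ {u}) := by
  intro M hM
  have hS_even : Even S.ncard := by
    rw [hS, ← Set.image_iUnion₂, Set.ncard_image_of_injective _ Subtype.val_injective]
    exact even_ncard_iUnion_supp fun c _ => hM.even_ncard_supp_of_not_isBarrier huv hnb c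
  have huS : u ∉ S := by
    rw [hS]
    simp
  have hodd : Odd (M ∩ edgeCut G (S ∪ {u})).ncard := by
    rw [← Nat.not_even_iff_odd, hM.even_ncard_inter_edgeCut_iff, Set.union_singleton,
      Set.ncard_insert_of_notMem huS, Nat.even_add_one, not_not]
    exact hS_even
  have hle : (M ∩ edgeCut G (S ∪ {u})).ncard ≤ 2 := by
    rw [← Set.ncard_pair huv]
    refine hM.ncard_inter_edgeCut_le (Set.toFinite _) fun x hx y hy hxy => ?_
    rcases hx with hxS | rfl
    · right
      by_contra hyB
      exact hy (Or.inl (hS ▸ mem_iUnion_supp_of_adj (hS ▸ hxS) hxy hyB))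
    · exact Or.inl (Set.mem_insert _ _)
  obtain ⟨k, hk⟩ := hodd
  omega

/-- For a 2-separation `{u, v}` of a matching covered graph and `S` the union of a
nonempty proper subset of the components of `G - u - v`, the cut `∂(S ∪ {u})` is
tight. -/
theorem stmt15 {V : Type*} [Fintype V] (G : SimpleGraph V)
    (hG : MatchingCovered G) (u v : V) (huv : u ≠ v)
    (hcut : ¬ (G.induce (({u, v} : Set V)ᶜ)).Connected)
    (hnb : ¬ IsBarrier G {u, v})
    (𝒞 : Set ((G.induce (({u, v} : Set V)ᶜ)).ConnectedComponent))
    (h1 : 𝒞.Nonempty) (h2 : 𝒞 ≠ Set.univ)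
    (S : Set V) (hS : S = ⋃ K ∈ 𝒞, Subtype.val '' K.supp) :
    TightCut G (S ∪ {u}) :=
  stmt15_general G u v huv hnb 𝒞 S hS
end

section
/- Let v0 be a vertex of degree two in a matching covered graph G of order at least four, with neighbors v1 and v2. Then ∂({v0, v1, v2}) is a tight cut of G. -/
open SimpleGraph

/-!
Every perfect matching `M` pairs `v₀` with one of its two neighbours, say `v₁`. Then the
only edge of `M` leaving `{v₀, v₁, v₂}` is the `M`-edge at `v₂`, whose other end cannot be
`v₀` or `v₁` since these are already matched to each other.
-/

namespace IsPM

variable {V : Type*} {G : SimpleGraph V} {M : Set (Sym2 V)}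

lemma exists_mem (hM : IsPM G M) (a : V) : ∃ b, s(a, b) ∈ M := by
  obtain ⟨e, ⟨he, ha⟩, -⟩ := hM.2 a
  exact ⟨_, (Sym2.other_spec ha).symm ▸ he⟩

lemma adj_of_mem (hM : IsPM G M) {a b : V} (h : s(a, b) ∈ M) : G.Adj a b :=
  hM.1 h

lemma eq_of_mem (hM : IsPM G M) {a b c : V} (hb : s(a, b) ∈ M) (hc : s(a, c) ∈ M) :
    b = c := by
  obtain ⟨e, -, he⟩ := hM.2 a
  exact Sym2.congr_right.mp <|
    (he _ ⟨hb, Sym2.mem_mk_left a b⟩).trans (he _ ⟨hc, Sym2.mem_mk_left a c⟩).symm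

lemma inter_edgeCut_triple (hM : IsPM G M) {a b c w : V} (hab : s(a, b) ∈ M)
    (hcw : s(c, w) ∈ M) (hca : c ≠ a) (hcb : c ≠ b) :
    M ∩ edgeCut G {a, b, c} = {s(c, w)} := by
  have hba : s(b, a) ∈ M := Sym2.eq_swap ▸ hab
  have hwX : w ∉ ({a, b, c} : Set V) := by
    rintro (rfl | rfl | rfl)
    · exact hcb (hM.eq_of_mem (Sym2.eq_swap ▸ hcw) hab)
    · exact hca (hM.eq_of_mem (Sym2.eq_swap ▸ hcw) hba)
    · exact (hM.adj_of_mem hcw).ne rfl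
  ext e
  constructor
  · rintro ⟨heM, -, x, y, rfl, hx, hy⟩
    rcases hx with rfl | rfl | rfl
    · exact (hy (Or.inr (Or.inl (hM.eq_of_mem hab heM).symm))).elim
    · exact (hy (Or.inl (hM.eq_of_mem hba heM).symm)).elim
    · rw [hM.eq_of_mem heM hcw]; rfl
  · rintro rfl
    exact ⟨hcw, hM.adj_of_mem hcw, c, w, rfl, by simp, hwX⟩

lemma ncard_inter_edgeCut_triple (hM : IsPM G M) {a b c : V} (hab : s(a, b) ∈ M)
    (hca : c ≠ a) (hcb : c ≠ b) : (M ∩ edgeCut G {a, b, c}).ncard = 1 := by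
  obtain ⟨w, hcw⟩ := hM.exists_mem c
  rw [hM.inter_edgeCut_triple hab hcw hca hcb, Set.ncard_singleton]

end IsPM

theorem stmt17_general {V : Type*} (G : SimpleGraph V)
    (v0 v1 v2 : V) (h12 : v1 ≠ v2) (hN : G.neighborSet v0 = {v1, v2}) :
    TightCut G {v0, v1, v2} := by
  intro M hM
  have hadj : ∀ u, G.Adj v0 u ↔ u = v1 ∨ u = v2 := fun u => Set.ext_iff.mp hN u
  obtain ⟨u, hu⟩ := hM.exists_mem v0
  rcases (hadj u).mp (hM.adj_of_mem hu) with rfl | rfl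
  · have hv2 : G.Adj v0 v2 := (hadj v2).mpr (Or.inr rfl)
    exact hM.ncard_inter_edgeCut_triple hu hv2.ne' h12.symm
  · have hv1 : G.Adj v0 v1 := (hadj v1).mpr (Or.inl rfl)
    rw [Set.pair_comm v1]
    exact hM.ncard_inter_edgeCut_triple hu hv1.ne' h12

/-- If `v₀` is a vertex of degree two of a matching covered graph of order at least
four, with neighbours `v₁` and `v₂`, then `∂({v₀, v₁, v₂})` is a tight cut. -/
theorem stmt17 {V : Type*} [Fintype V] (G : SimpleGraph V)
    (hG : MatchingCovered G) (h4 : 4 ≤ Nat.card V)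
    (v0 v1 v2 : V) (h12 : v1 ≠ v2) (hN : G.neighborSet v0 = {v1, v2}) :
    TightCut G {v0, v1, v2} :=
  stmt17_general G v0 v1 v2 h12 hN
end
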